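/- arXiv:1007.4731 — 3 statements merged into one kernel-verified Lean document; each statement's English description precedes it below -/
import Mathlib

section
/- Let Ω ⊆ ℝ² be a bounded open convex set containing the origin, and let σ, Λ and the lacunary maximal operator 𝓜 be as defined below. Let 1 ≤ q < ∞ and suppose there is B > 0 such that ‖𝓜f‖_{L^q(ℝ²)} ≤ B‖f‖_{L^q(ℝ²)} for every continuous compactly supported f : ℝ² → ℂ. Then there exist constants c > 0 and δ₁ > 0, depending only on Ω and q, such that sup_{θ ∈ S¹} (∫₀^{δ₁} Λ(θ,δ)^q δ^{-1} dδ)^{1/q} ≤ c^{-1} B. -/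
open MeasureTheory Set
open scoped ENNReal

/-- The support function `h_Ω(θ) = sup_{z ∈ Ω} ⟨z, θ⟩`. -/
noncomputable def suppFn (Ω : Set (EuclideanSpace ℝ (Fin 2)))
    (θ : EuclideanSpace ℝ (Fin 2)) : ℝ :=
  sSup ((fun z => (inner ℝ z θ : ℝ)) '' Ω)

/-- The cap `C⁺(θ,δ) = {y ∈ ∂Ω : ⟨y,θ⟩ ≥ h_Ω(θ) − δ}`; the cap
`C⁻(θ,δ)` is `capPlus Ω (-θ) δ`. -/
def capPlus (Ω : Set (EuclideanSpace ℝ (Fin 2)))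
    (θ : EuclideanSpace ℝ (Fin 2)) (δ : ℝ) : Set (EuclideanSpace ℝ (Fin 2)) :=
  {y | y ∈ frontier Ω ∧ suppFn Ω θ - δ ≤ (inner ℝ y θ : ℝ)}

/-- Arclength measure `σ` on `∂Ω`: one-dimensional Hausdorff measure
restricted to the frontier of `Ω`. -/
noncomputable def bdyMeasure (Ω : Set (EuclideanSpace ℝ (Fin 2))) :
    Measure (EuclideanSpace ℝ (Fin 2)) :=
  (μH[1] : Measure (EuclideanSpace ℝ (Fin 2))).restrict (frontier Ω)

/-- `Λ(θ,δ) = max(σ(C⁺(θ,δ)), σ(C⁻(θ,δ)))`. -/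
noncomputable def capLen (Ω : Set (EuclideanSpace ℝ (Fin 2)))
    (θ : EuclideanSpace ℝ (Fin 2)) (δ : ℝ) : ℝ≥0∞ :=
  max (bdyMeasure Ω (capPlus Ω θ δ)) (bdyMeasure Ω (capPlus Ω (-θ) δ))

/-- The lacunary maximal function `𝓜f(x) = sup_{k ∈ ℤ} |∫_{∂Ω} f(x − 2^k y) dσ(y)|`. -/
noncomputable def lacMax (Ω : Set (EuclideanSpace ℝ (Fin 2)))
    (f : EuclideanSpace ℝ (Fin 2) → ℂ) (x : EuclideanSpace ℝ (Fin 2)) : ℝ≥0∞ :=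
  ⨆ k : ℤ, (‖∫ y, f (x - (2:ℝ)^k • y) ∂(bdyMeasure Ω)‖₊ : ℝ≥0∞)

/-!
Test the maximal inequality on a bump `f` equal to `1` on the slab `|⟪x, θ⟫| ≤ 2δ`,
`δ = δ₁ / 2 ^ N`, intersected with a ball of radius `4R ≥ 4 sup_Ω |z|`, so that `‖f‖_q ^ q ≲ Rδ`.
For `n < N` and `c = 2 ^ (n - N)`, the translate `x - c • C⁺(θ, δ₁ / 2 ^ n)` lies in that slab
whenever `⟪x, θ⟫ ∈ [c h_Ω(θ), c h_Ω(θ) + δ)`, and then `𝓜f(x) ≥ σ(C⁺(θ, δ₁ / 2 ^ n))`. Because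
`h_Ω(θ) ≥ δ₁`, these strips are disjoint for different `n`; cut to width `2R` they have area
`2Rδ`, so `∑_{n < N} σ(C⁺(θ, δ₁ / 2 ^ n)) ^ q ≤ 64 B ^ q` uniformly in `N`. As `Λ(θ, ·)` is
monotone, `∫₀^{δ₁} Λ(θ, δ) ^ q dδ / δ` is bounded by the corresponding dyadic sum.

The averages defining `𝓜` are finite because `σ` is: `∂Ω` is the image of a circle under the
1-Lipschitz nearest-point projection onto `closure Ω`.
-/

open Metric Real
open scoped NNReal RealInnerProductSpace

section ConvexProjection

variable {F : Type*} [NormedAddCommGroup F] [InnerProductSpace ℝ F]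

theorem norm_sub_le_of_forall_inner_sub_nonpos {K : Set F} {u v a b : F} (ha : a ∈ K)
    (hb : b ∈ K) (hua : ∀ w ∈ K, ⟪u - a, w - a⟫ ≤ 0) (hvb : ∀ w ∈ K, ⟪v - b, w - b⟫ ≤ 0) :
    ‖a - b‖ ≤ ‖u - v‖ := by
  have hsq : ‖a - b‖ ^ 2 ≤ ‖u - v‖ * ‖a - b‖ := calc
    ‖a - b‖ ^ 2 ≤ ⟪u - v, a - b⟫ := by
      have h := add_nonpos (hua b hb) (hvb a ha)
      rw [← real_inner_self_eq_norm_sq]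
      simp only [inner_sub_left, inner_sub_right, real_inner_comm] at h ⊢
      linarith
    _ ≤ ‖u - v‖ * ‖a - b‖ := real_inner_le_norm _ _
  nlinarith [norm_nonneg (a - b), norm_nonneg (u - v)]

theorem Convex.exists_lipschitzWith_proj {K : Set F} (hK : Convex ℝ K) (hKc : IsComplete K)
    (hne : K.Nonempty) :
    ∃ P : F → F, LipschitzWith 1 P ∧ ∀ u, P u ∈ K ∧ ∀ w ∈ K, ⟪u - P u, w - P u⟫ ≤ 0 := by
  choose P hPK hP using fun u => exists_norm_eq_iInf_of_complete_convex hne hKc hK u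
  have hvar u : ∀ w ∈ K, ⟪u - P u, w - P u⟫ ≤ 0 :=
    (norm_eq_iInf_iff_real_inner_le_zero hK (hPK u)).1 (hP u)
  refine ⟨P, LipschitzWith.of_dist_le_mul fun u v => ?_, fun u => ⟨hPK u, hvar u⟩⟩
  simpa [dist_eq_norm] using
    norm_sub_le_of_forall_inner_sub_nonpos (hPK u) (hPK v) (hvar u) (hvar v)

theorem exists_nonneg_norm_add_smul_eq {z ν : F} {ρ : ℝ} (hν : ν ≠ 0) (hz : ‖z‖ ≤ ρ) :
    ∃ t : ℝ, 0 ≤ t ∧ ‖z + t • ν‖ = ρ := by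
  set T := (ρ + ‖z‖) / ‖ν‖
  have hT : 0 ≤ T := div_nonneg (by linarith [norm_nonneg z]) (norm_nonneg ν)
  have hρT : ρ ≤ ‖z + T • ν‖ := calc
    ρ = ‖T • ν‖ - ‖z‖ := by
      rw [norm_smul, Real.norm_of_nonneg hT, div_mul_cancel₀ _ (norm_ne_zero_iff.2 hν)]; ring
    _ ≤ ‖z + T • ν‖ := by
      have := norm_sub_le (z + T • ν) z
      rw [add_sub_cancel_left] at this
      linarith
  have hcont : Continuous fun t : ℝ => ‖z + t • ν‖ := by fun_prop
  obtain ⟨t, ht, hρ⟩ := intermediate_value_Icc hT hcont.continuousOn ⟨by simpa using hz, hρT⟩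
  exact ⟨t, ht.1, hρ⟩

variable [CompleteSpace F]

/-- A boundary point `z` is the projection of the point where an outer normal ray at `z` leaves
`closedBall 0 ρ`. -/
theorem frontier_subset_image_sphere {Ω : Set F} (hΩo : IsOpen Ω) (hΩc : Convex ℝ Ω) {ρ : ℝ}
    (hΩρ : Ω ⊆ closedBall 0 ρ) {P : F → F}
    (hP : ∀ u, P u ∈ closure Ω ∧ ∀ w ∈ closure Ω, ⟪u - P u, w - P u⟫ ≤ 0) :
    frontier Ω ⊆ P '' sphere 0 ρ := by
  intro z hz
  have hzK : z ∈ closure Ω := frontier_subset_closure hz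
  obtain ⟨f, hf⟩ := geometric_hahn_banach_open_point hΩc hΩo (hΩo.frontier_eq ▸ hz).2
  set ν := (InnerProductSpace.toDual ℝ F).symm f
  have hν w : ⟪ν, w⟫ = f w := InnerProductSpace.toDual_symm_apply
  have hfK : ∀ w ∈ closure Ω, f w ≤ f z :=
    closure_minimal (fun w hw => (hf w hw).le) (isClosed_le f.continuous continuous_const)
  have hν0 : ν ≠ 0 := by
    intro h0
    obtain ⟨a, ha⟩ := closure_nonempty_iff.1 ⟨z, hzK⟩
    have := hf a ha
    rw [← hν, ← hν, h0, inner_zero_left, inner_zero_left] at this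
    exact lt_irrefl _ this
  obtain ⟨t, ht, hzt⟩ := exists_nonneg_norm_add_smul_eq hν0
    (mem_closedBall_zero_iff.1 (closure_minimal hΩρ isClosed_closedBall hzK))
  refine ⟨z + t • ν, mem_sphere_zero_iff_norm.2 hzt, ?_⟩
  have hzvar : ∀ w ∈ closure Ω, ⟪z + t • ν - z, w - z⟫ ≤ 0 := fun w hw => by
    rw [add_sub_cancel_left, real_inner_smul_left, inner_sub_right, hν, hν]
    exact mul_nonpos_of_nonneg_of_nonpos ht (by linarith [hfK w hw])
  have := norm_sub_le_of_forall_inner_sub_nonpos (hP (z + t • ν)).1 hzK (hP _).2 hzvar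
  rwa [sub_self, norm_zero, norm_le_zero_iff, sub_eq_zero] at this

end ConvexProjection

section InnerProductSpace

variable {E : Type*} [NormedAddCommGroup E] [InnerProductSpace ℝ E]

theorem exists_orthonormalBasis_apply_eq [FiniteDimensional ℝ E] {ι : Type*} [Fintype ι]
    (hι : Module.finrank ℝ E = Fintype.card ι) (i : ι) {θ : E} (hθ : ‖θ‖ = 1) :
    ∃ b : OrthonormalBasis ι ℝ E, b i = θ := by
  have hon : Orthonormal ℝ (({i} : Set ι).domRestrict fun _ => θ) := by
    rw [orthonormal_iff_ite]
    rintro ⟨j, rfl⟩ ⟨k, rfl⟩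
    simp [Set.domRestrict, hθ]
  obtain ⟨b, hb⟩ := hon.exists_orthonormalBasis_extension_of_card_eq hι
  exact ⟨b, hb i rfl⟩

theorem OrthonormalBasis.abs_repr_apply_le {ι : Type*} [Fintype ι] (b : OrthonormalBasis ι ℝ E)
    (x : E) (i : ι) : |b.repr x i| ≤ ‖x‖ := by
  simpa [b.repr_apply_apply, b.orthonormal.1 i] using abs_real_inner_le_norm (b i) x

theorem OrthonormalBasis.norm_le_sum_abs_repr {ι : Type*} [Fintype ι] (b : OrthonormalBasis ι ℝ E)
    (x : E) : ‖x‖ ≤ ∑ i, |b.repr x i| := by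
  conv_lhs => rw [← b.sum_repr x]
  refine (norm_sum_le _ _).trans (Finset.sum_le_sum fun i _ => ?_)
  simp [norm_smul, b.orthonormal.1 i]

theorem exists_slab_bump [FiniteDimensional ℝ E] (θ : E) {a a' ρ ρ' : ℝ} (ha : 0 < a)
    (haa' : a < a') (hρ : 0 < ρ) (hρρ' : ρ < ρ') :
    ∃ g : E → ℝ, Continuous g ∧ HasCompactSupport g ∧ (∀ x, g x ∈ Icc 0 1) ∧
      (∀ x, |⟪x, θ⟫| ≤ a → ‖x‖ ≤ ρ → g x = 1) ∧
      Function.support g ⊆ {x | |⟪x, θ⟫| < a' ∧ ‖x‖ < ρ'} := by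
  let φ : ContDiffBump (0 : ℝ) := ⟨a, a', ha, haa'⟩
  let ψ : ContDiffBump (0 : E) := ⟨ρ, ρ', hρ, hρρ'⟩
  refine ⟨fun x => φ ⟪x, θ⟫ * ψ x, (φ.continuous.comp (continuous_id.inner continuous_const)).mul
    ψ.continuous, ψ.hasCompactSupport.mul_left, fun x => ⟨mul_nonneg φ.nonneg ψ.nonneg,
    mul_le_one₀ φ.le_one ψ.nonneg ψ.le_one⟩, fun x hxθ hx => ?_, fun x hx => ?_⟩
  · dsimp only
    rw [φ.one_of_mem_closedBall (by simpa using hxθ), ψ.one_of_mem_closedBall (by simpa using hx),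
      one_mul]
  · have hφ : φ ⟪x, θ⟫ ≠ 0 := left_ne_zero_of_mul hx
    have hψ : ψ x ≠ 0 := right_ne_zero_of_mul hx
    rw [← Function.mem_support, φ.support_eq] at hφ
    rw [← Function.mem_support, ψ.support_eq] at hψ
    simpa using And.intro hφ hψ

variable [FiniteDimensional ℝ E] [MeasurableSpace E] [BorelSpace E]

theorem OrthonormalBasis.volume_setOf_forall_repr_mem {ι : Type*} [Fintype ι]
    (b : OrthonormalBasis ι ℝ E) {s : ι → Set ℝ} (hs : ∀ i, MeasurableSet (s i)) :
    volume {x | ∀ i, b.repr x i ∈ s i} = ∏ i, volume (s i) := by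
  have hpi : MeasurableSet (univ.pi s) := MeasurableSet.univ_pi hs
  have : {x | ∀ i, b.repr x i ∈ s i} = b.repr ⁻¹' (WithLp.ofLp ⁻¹' univ.pi s) := by ext; simp
  rw [this, b.measurePreserving_repr.measure_preimage
      (WithLp.measurable_ofLp 2 _ hpi).nullMeasurableSet,
    (PiLp.volume_preserving_ofLp ι).measure_preimage hpi.nullMeasurableSet, volume_pi_pi]

theorem OrthonormalBasis.volume_setOf_repr_mem_and_repr_mem (b : OrthonormalBasis (Fin 2) ℝ E)
    {I J : Set ℝ} (hI : MeasurableSet I) (hJ : MeasurableSet J) :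
    volume {x | b.repr x 0 ∈ I ∧ b.repr x 1 ∈ J} = volume I * volume J := by
  simpa [Fin.forall_fin_two, Fin.prod_univ_two] using
    b.volume_setOf_forall_repr_mem (s := ![I, J]) (Fin.forall_fin_two.2 ⟨hI, hJ⟩)

end InnerProductSpace

theorem lintegral_nnnorm_rpow_le_measure {α E : Type*} [MeasurableSpace α] {μ : Measure α}
    [NormedAddCommGroup E] {f : α → E} (hf : ∀ x, ‖f x‖ ≤ 1) {T : Set α} (hT : MeasurableSet T)
    (hfT : Function.support f ⊆ T) {q : ℝ} (hq : 0 < q) :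
    ∫⁻ x, (‖f x‖₊ : ℝ≥0∞) ^ q ∂μ ≤ μ T := by
  rw [← lintegral_indicator_one hT]
  refine lintegral_mono fun x => ?_
  by_cases hx : x ∈ T
  · rw [indicator_of_mem hx]
    exact ENNReal.rpow_le_one (by exact_mod_cast hf x) hq.le
  · rw [indicator_of_notMem hx, Function.notMem_support.1 (fun h => hx (hfT h)), nnnorm_zero,
      ENNReal.coe_zero, ENNReal.zero_rpow_of_pos hq]

theorem sum_mul_measure_le_lintegral {α ι : Type*} [MeasurableSpace α] {μ : Measure α}
    {s : Finset ι} {S : ι → Set α} (hd : (s : Set ι).PairwiseDisjoint S)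
    (hS : ∀ i ∈ s, MeasurableSet (S i)) {a : ι → ℝ≥0∞} {F : α → ℝ≥0∞}
    (haF : ∀ i ∈ s, ∀ x ∈ S i, a i ≤ F x) :
    ∑ i ∈ s, a i * μ (S i) ≤ ∫⁻ x, F x ∂μ := calc
  ∑ i ∈ s, a i * μ (S i) = ∑ i ∈ s, ∫⁻ _ in S i, a i ∂μ := by simp
  _ ≤ ∑ i ∈ s, ∫⁻ x in S i, F x ∂μ :=
    Finset.sum_le_sum fun i hi => setLIntegral_mono' (hS i hi) (haF i hi)
  _ = ∫⁻ x in ⋃ i ∈ s, S i, F x ∂μ := (lintegral_biUnion_finset hd hS F).symm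
  _ ≤ ∫⁻ x, F x ∂μ := setLIntegral_le_lintegral _ _

theorem ENNReal.le_rpow_mul_of_rpow_inv_le {a b c : ℝ≥0∞} {q : ℝ} (hq : 0 < q)
    (h : a ^ (1 / q) ≤ b * c ^ (1 / q)) : a ≤ b ^ q * c := by
  have := ENNReal.rpow_le_rpow h hq.le
  rwa [ENNReal.mul_rpow_of_nonneg _ _ hq.le, ← ENNReal.rpow_mul, ← ENNReal.rpow_mul,
    one_div_mul_cancel hq.ne', ENNReal.rpow_one, ENNReal.rpow_one] at this

theorem ENNReal.mul_rpow_rpow_one_div_le {C A : ℝ≥0∞} (hC : 1 ≤ C) {q : ℝ} (hq : 1 ≤ q) :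
    (C * A ^ q) ^ (1 / q) ≤ C * A := by
  have hq0 : 0 < q := by linarith
  rw [ENNReal.mul_rpow_of_nonneg _ _ (by positivity), ← ENNReal.rpow_mul,
    mul_one_div_cancel hq0.ne', ENNReal.rpow_one]
  gcongr
  calc C ^ (1 / q) ≤ C ^ (1 : ℝ) :=
        ENNReal.rpow_le_rpow_of_exponent_le hC ((div_le_one hq0).2 hq)
    _ = C := ENNReal.rpow_one C

theorem lintegral_Ioo_div_le_tsum {F : ℝ → ℝ≥0∞} (hF : Monotone F) {a : ℝ} (ha : 0 < a) :
    ∫⁻ t in Ioo 0 a, F t / ENNReal.ofReal t ≤ ∑' n : ℕ, F (a / 2 ^ n) := by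
  have hcover : Ioo 0 a ⊆ ⋃ n : ℕ, Ioc (a / 2 ^ (n + 1)) (a / 2 ^ n) := fun t ht => by
    obtain ⟨n, hn, hn'⟩ := exists_nat_pow_near ((one_le_div ht.1).2 ht.2.le) one_lt_two
    rw [le_div_iff₀ ht.1] at hn
    rw [div_lt_iff₀ ht.1] at hn'
    exact mem_iUnion.2 ⟨n, (div_lt_iff₀ (by positivity)).2 (by linarith),
      (le_div_iff₀ (by positivity)).2 (by linarith)⟩
  have hpiece n : ∫⁻ t in Ioc (a / 2 ^ (n + 1)) (a / 2 ^ n), F t / ENNReal.ofReal t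
      ≤ F (a / 2 ^ n) := calc
    _ ≤ ∫⁻ _ in Ioc (a / 2 ^ (n + 1)) (a / 2 ^ n),
          F (a / 2 ^ n) / ENNReal.ofReal (a / 2 ^ (n + 1)) :=
        setLIntegral_mono measurable_const fun t ht =>
          ENNReal.div_le_div (hF ht.2) (ENNReal.ofReal_le_ofReal ht.1.le)
    _ = F (a / 2 ^ n) := by
        have hlen : a / 2 ^ n - a / 2 ^ (n + 1) = a / 2 ^ (n + 1) := by rw [pow_succ]; ring
        rw [setLIntegral_const, Real.volume_Ioc, hlen]
        exact ENNReal.div_mul_cancel (ENNReal.ofReal_pos.2 (by positivity)).ne'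
          ENNReal.ofReal_ne_top
  calc ∫⁻ t in Ioo 0 a, F t / ENNReal.ofReal t
      ≤ ∫⁻ t in ⋃ n : ℕ, Ioc (a / 2 ^ (n + 1)) (a / 2 ^ n), F t / ENNReal.ofReal t :=
        lintegral_mono_set hcover
    _ ≤ ∑' n : ℕ, ∫⁻ t in Ioc (a / 2 ^ (n + 1)) (a / 2 ^ n), F t / ENNReal.ofReal t :=
        lintegral_iUnion_le _ _
    _ ≤ ∑' n : ℕ, F (a / 2 ^ n) := ENNReal.tsum_le_tsum hpiece

open Function in
theorem pairwise_disjoint_Ico_add {a : ℕ → ℝ} {δ : ℝ} (hδ : 0 ≤ δ)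
    (ha : ∀ n, a n + δ ≤ a (n + 1)) :
    Pairwise (Disjoint on fun n => Ico (a n) (a n + δ)) :=
  (monotone_nat_of_le_succ fun n => by linarith [ha n]).pairwise_disjoint_on_Ico_succ.mono
    fun m n h => h.mono (Ico_subset_Ico_right (ha m)) (Ico_subset_Ico_right (ha n))

local notation "E²" => EuclideanSpace ℝ (Fin 2)

theorem hausdorffMeasure_sphere_lt_top (x : E²) (ρ : ℝ) : μH[1] (sphere x ρ) < ⊤ := by
  let e := Complex.orthonormalBasisOneI.repr
  have hsub : sphere x ρ ⊆ (e ∘ circleMap (e.symm x) ρ) '' Ioc 0 (2 * π) := by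
    rw [image_comp, image_circleMap_Ioc, e.image_sphere, e.apply_symm_apply]
    intro y hy
    rw [mem_sphere] at hy ⊢
    rw [hy, abs_of_nonneg (hy ▸ dist_nonneg)]
  calc μH[1] (sphere x ρ)
      ≤ μH[1] ((e ∘ circleMap (e.symm x) ρ) '' Ioc 0 (2 * π)) := measure_mono hsub
    _ ≤ (1 * nnabs ρ) ^ (1 : ℝ) * μH[1] (Ioc 0 (2 * π)) :=
      (e.lipschitz.comp (lipschitzWith_circleMap _ _)).hausdorffMeasure_image_le zero_le_one _
    _ < ⊤ := by
      rw [hausdorffMeasure_real, Real.volume_Ioc]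
      exact ENNReal.mul_lt_top (by simp) ENNReal.ofReal_lt_top

theorem hausdorffMeasure_frontier_lt_top {Ω : Set E²} (hΩo : IsOpen Ω) (hΩc : Convex ℝ Ω)
    (hΩb : Bornology.IsBounded Ω) : μH[1] (frontier Ω) < ⊤ := by
  rcases Ω.eq_empty_or_nonempty with rfl | hne
  · simp
  obtain ⟨ρ, hρ⟩ := hΩb.subset_closedBall 0
  obtain ⟨P, hPlip, hP⟩ := hΩc.closure.exists_lipschitzWith_proj isClosed_closure.isComplete
    hne.closure
  calc μH[1] (frontier Ω) ≤ μH[1] (P '' sphere 0 ρ) :=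
        measure_mono (frontier_subset_image_sphere hΩo hΩc hρ hP)
    _ ≤ (1 : ℝ≥0) ^ (1 : ℝ) * μH[1] (sphere (0 : E²) ρ) :=
        hPlip.hausdorffMeasure_image_le zero_le_one _
    _ < ⊤ := by simpa using hausdorffMeasure_sphere_lt_top 0 ρ

theorem isFiniteMeasure_bdyMeasure {Ω : Set E²} (hΩo : IsOpen Ω) (hΩc : Convex ℝ Ω)
    (hΩb : Bornology.IsBounded Ω) : IsFiniteMeasure (bdyMeasure Ω) :=
  ⟨by simpa [bdyMeasure] using hausdorffMeasure_frontier_lt_top hΩo hΩc hΩb⟩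

section Caps

variable {Ω : Set E²}

theorem inner_le_suppFn (hΩ : Bornology.IsBounded Ω) (θ : E²) {z : E²} (hz : z ∈ closure Ω) :
    ⟪z, θ⟫ ≤ suppFn Ω θ := by
  obtain ⟨R, hR⟩ := hΩ.subset_closedBall 0
  have hbdd : BddAbove ((fun z => ⟪z, θ⟫) '' Ω) := ⟨R * ‖θ‖, forall_mem_image.2 fun w hw =>
    (real_inner_le_norm w θ).trans
      (mul_le_mul_of_nonneg_right (mem_closedBall_zero_iff.1 (hR hw)) (norm_nonneg θ))⟩
  have : closure Ω ⊆ {w | ⟪w, θ⟫ ≤ suppFn Ω θ} :=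
    closure_minimal (fun w hw => le_csSup hbdd (mem_image_of_mem _ hw))
      (isClosed_le (continuous_id.inner continuous_const) continuous_const)
  exact this hz

theorem suppFn_le (hne : Ω.Nonempty) {R : ℝ} (hΩR : Ω ⊆ closedBall 0 R) (θ : E²) :
    suppFn Ω θ ≤ R * ‖θ‖ :=
  csSup_le (hne.image _) <| forall_mem_image.2 fun z hz =>
    (real_inner_le_norm z θ).trans
      (mul_le_mul_of_nonneg_right (mem_closedBall_zero_iff.1 (hΩR hz)) (norm_nonneg θ))

theorem le_suppFn_of_ball_subset (hΩ : Bornology.IsBounded Ω) {r s : ℝ} (hball : ball 0 r ⊆ Ω)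
    (hs : 0 ≤ s) (hsr : s < r) {θ : E²} (hθ : ‖θ‖ = 1) : s ≤ suppFn Ω θ := by
  have hmem : s • θ ∈ Ω := hball (by rwa [mem_ball_zero_iff, norm_smul, hθ, mul_one,
    Real.norm_of_nonneg hs])
  simpa [real_inner_smul_left, real_inner_self_eq_norm_sq, hθ] using
    inner_le_suppFn hΩ θ (subset_closure hmem)

theorem capPlus_mono (Ω : Set E²) (θ : E²) : Monotone (capPlus Ω θ) :=
  fun _ _ h _ hy => ⟨hy.1, by linarith [hy.2]⟩

theorem measurableSet_capPlus (Ω : Set E²) (θ : E²) (δ : ℝ) : MeasurableSet (capPlus Ω θ δ) :=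
  show MeasurableSet (frontier Ω ∩ {y | suppFn Ω θ - δ ≤ ⟪y, θ⟫}) from
  (isClosed_frontier.inter
    (isClosed_le continuous_const (continuous_id.inner continuous_const))).measurableSet

theorem capLen_mono (Ω : Set E²) (θ : E²) : Monotone (capLen Ω θ) :=
  fun _ _ h => max_le_max (measure_mono (capPlus_mono Ω θ h))
    (measure_mono (capPlus_mono Ω (-θ) h))

theorem capLen_rpow_le (Ω : Set E²) (θ : E²) (δ q : ℝ) :
    capLen Ω θ δ ^ q
      ≤ bdyMeasure Ω (capPlus Ω θ δ) ^ q + bdyMeasure Ω (capPlus Ω (-θ) δ) ^ q := by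
  rcases max_choice (bdyMeasure Ω (capPlus Ω θ δ)) (bdyMeasure Ω (capPlus Ω (-θ) δ)) with h | h <;>
    rw [capLen, h]
  exacts [le_self_add, le_add_self]

end Caps

section Detection

variable {Ω : Set E²}

theorem bdyMeasure_le_lacMax [IsFiniteMeasure (bdyMeasure Ω)] {g : E² → ℝ} (hg : Continuous g)
    (hg01 : ∀ x, g x ∈ Icc 0 1) {S : Set E²} (hS : MeasurableSet S) (k : ℤ) {x : E²}
    (hgS : ∀ y ∈ S, g (x - (2 : ℝ) ^ k • y) = 1) :
    bdyMeasure Ω S ≤ lacMax Ω (fun z => (g z : ℂ)) x := by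
  set σ := bdyMeasure Ω
  have hint : Integrable (fun y => g (x - (2 : ℝ) ^ k • y)) σ :=
    (integrable_const (1 : ℝ)).mono' (by fun_prop) (ae_of_all _ fun y => by
      simpa [abs_of_nonneg (hg01 _).1] using (hg01 _).2)
  calc σ S = ∫⁻ y, S.indicator 1 y ∂σ := (lintegral_indicator_one hS).symm
    _ ≤ ∫⁻ y, ENNReal.ofReal (g (x - (2 : ℝ) ^ k • y)) ∂σ := lintegral_mono fun y => by
        by_cases hy : y ∈ S
        · simp [indicator_of_mem hy, hgS y hy]
        · simp [indicator_of_notMem hy]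
    _ = ENNReal.ofReal (∫ y, g (x - (2 : ℝ) ^ k • y) ∂σ) :=
        (ofReal_integral_eq_lintegral_ofReal hint (ae_of_all _ fun y => (hg01 _).1)).symm
    _ ≤ ‖∫ y, (g (x - (2 : ℝ) ^ k • y) : ℂ) ∂σ‖₊ := by
        rw [integral_complex_ofReal, Complex.nnnorm_real, ← enorm_eq_nnnorm,
          Real.enorm_eq_ofReal_abs]
        exact ENNReal.ofReal_le_ofReal (le_abs_self _)
    _ ≤ lacMax Ω (fun z => (g z : ℂ)) x :=
        le_iSup (fun j : ℤ => (‖∫ y, (g (x - (2 : ℝ) ^ j • y) : ℂ) ∂σ‖₊ : ℝ≥0∞)) k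

theorem inner_sub_smul_mem_Icc (hΩ : Bornology.IsBounded Ω) {θ x y : E²} {c t δ : ℝ}
    (hc : 0 ≤ c) (hct : c * t = δ) (hy : y ∈ capPlus Ω θ t)
    (hx : ⟪x, θ⟫ ∈ Icc (c * suppFn Ω θ) (c * suppFn Ω θ + δ)) :
    ⟪x - c • y, θ⟫ ∈ Icc 0 (2 * δ) := by
  have hyh : ⟪y, θ⟫ ≤ suppFn Ω θ := inner_le_suppFn hΩ θ (frontier_subset_closure hy.1)
  have h1 := mul_le_mul_of_nonneg_left hyh hc
  have h2 := mul_le_mul_of_nonneg_left hy.2 hc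
  rw [inner_sub_left, real_inner_smul_left]
  constructor <;> nlinarith [hx.1, hx.2]

theorem bdyMeasure_capPlus_le_lacMax [IsFiniteMeasure (bdyMeasure Ω)] {R : ℝ}
    (hΩR : Ω ⊆ closedBall 0 R) {θ : E²} {g : E² → ℝ} (hg : Continuous g)
    (hg01 : ∀ x, g x ∈ Icc 0 1) {δ : ℝ} (hg1 : ∀ x, |⟪x, θ⟫| ≤ 2 * δ → ‖x‖ ≤ 4 * R → g x = 1)
    {k : ℤ} {t : ℝ} (hk : (2 : ℝ) ^ k ≤ 1) (hkt : (2 : ℝ) ^ k * t = δ) {x : E²}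
    (hxθ : ⟪x, θ⟫ ∈ Icc ((2 : ℝ) ^ k * suppFn Ω θ) ((2 : ℝ) ^ k * suppFn Ω θ + δ))
    (hx : ‖x‖ ≤ 3 * R) :
    bdyMeasure Ω (capPlus Ω θ t) ≤ lacMax Ω (fun z => (g z : ℂ)) x := by
  have hΩ : Bornology.IsBounded Ω := isBounded_closedBall.subset hΩR
  refine bdyMeasure_le_lacMax hg hg01 (measurableSet_capPlus Ω θ t) k fun y hy => hg1 _ ?_ ?_
  · obtain ⟨h0, h2⟩ := inner_sub_smul_mem_Icc hΩ (by positivity) hkt hy hxθ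
    exact abs_le.2 ⟨by linarith, h2⟩
  · have hy : ‖y‖ ≤ R := mem_closedBall_zero_iff.1
      (closure_minimal hΩR isClosed_closedBall (frontier_subset_closure hy.1))
    calc ‖x - (2 : ℝ) ^ k • y‖ ≤ ‖x‖ + ‖(2 : ℝ) ^ k • y‖ := norm_sub_le _ _
      _ = ‖x‖ + (2 : ℝ) ^ k * ‖y‖ := by rw [norm_smul, Real.norm_of_nonneg (by positivity)]
      _ ≤ 3 * R + 1 * R := by gcongr
      _ = 4 * R := by ring

end Detection

theorem lintegral_nnnorm_rpow_le_of_support_subset_slab {θ : E²} (hθ : ‖θ‖ = 1) {f : E² → ℂ}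
    (hf : ∀ x, ‖f x‖ ≤ 1) {a ρ : ℝ} (hsupp : Function.support f ⊆ {x | |⟪x, θ⟫| < a ∧ ‖x‖ < ρ})
    {q : ℝ} (hq : 0 < q) :
    ∫⁻ x, (‖f x‖₊ : ℝ≥0∞) ^ q ≤ ENNReal.ofReal (2 * a) * ENNReal.ofReal (2 * ρ) := by
  obtain ⟨b, hb⟩ := exists_orthonormalBasis_apply_eq (ι := Fin 2) (by simp) 0 hθ
  have hb0 x : b.repr x 0 = ⟪x, θ⟫ := by rw [b.repr_apply_apply, hb, real_inner_comm]
  have hT : MeasurableSet {x | b.repr x 0 ∈ Icc (-a) a ∧ b.repr x 1 ∈ Icc (-ρ) ρ} :=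
    (measurableSet_Icc.preimage (by fun_prop)).inter (measurableSet_Icc.preimage (by fun_prop))
  calc ∫⁻ x, (‖f x‖₊ : ℝ≥0∞) ^ q
      ≤ volume {x | b.repr x 0 ∈ Icc (-a) a ∧ b.repr x 1 ∈ Icc (-ρ) ρ} :=
        lintegral_nnnorm_rpow_le_measure hf hT (fun x hx => ⟨abs_le.1 (hb0 x ▸ (hsupp hx).1.le),
          abs_le.1 ((b.abs_repr_apply_le x 1).trans (hsupp hx).2.le)⟩) hq
    _ = ENNReal.ofReal (2 * a) * ENNReal.ofReal (2 * ρ) := by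
        rw [b.volume_setOf_repr_mem_and_repr_mem measurableSet_Icc measurableSet_Icc,
          Real.volume_Icc, Real.volume_Icc, sub_neg_eq_add, sub_neg_eq_add, ← two_mul, ← two_mul]

theorem sum_bdyMeasure_capPlus_rpow_mul_le_lintegral_lacMax {Ω : Set E²}
    [IsFiniteMeasure (bdyMeasure Ω)] {R : ℝ} (hΩR : Ω ⊆ closedBall 0 R) {θ : E²} (hθ : ‖θ‖ = 1)
    {δ₁ : ℝ} (hδ₁ : 0 < δ₁) (hδ₁h : δ₁ ≤ suppFn Ω θ) (hhR : suppFn Ω θ ≤ R) {q : ℝ}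
    (hq : 0 ≤ q) (N : ℕ) {g : E² → ℝ} (hg : Continuous g) (hg01 : ∀ x, g x ∈ Icc 0 1)
    (hg1 : ∀ x, |⟪x, θ⟫| ≤ 2 * (δ₁ / 2 ^ N) → ‖x‖ ≤ 4 * R → g x = 1) :
    (∑ n ∈ Finset.range N, bdyMeasure Ω (capPlus Ω θ (δ₁ / 2 ^ n)) ^ q) *
        (ENNReal.ofReal (δ₁ / 2 ^ N) * ENNReal.ofReal (2 * R))
      ≤ ∫⁻ x, lacMax Ω (fun z => (g z : ℂ)) x ^ q := by
  obtain ⟨b, hb⟩ := exists_orthonormalBasis_apply_eq (ι := Fin 2) (by simp) 0 hθ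
  have hb0 x : b.repr x 0 = ⟪x, θ⟫ := by rw [b.repr_apply_apply, hb, real_inner_comm]
  set h := suppFn Ω θ
  set δ := δ₁ / 2 ^ N
  set c : ℕ → ℝ := fun n => 2 ^ n / 2 ^ N
  set S : ℕ → Set E² := fun n =>
    {x | b.repr x 0 ∈ Ico (c n * h) (c n * h + δ) ∧ b.repr x 1 ∈ Icc (-R) R}
  have hSm n : MeasurableSet (S n) :=
    (measurableSet_Ico.preimage (by fun_prop)).inter (measurableSet_Icc.preimage (by fun_prop))
  have hδ : 0 < δ := by positivity
  have hdet : ∀ n ∈ Finset.range N, ∀ x ∈ S n, bdyMeasure Ω (capPlus Ω θ (δ₁ / 2 ^ n)) ^ q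
      ≤ lacMax Ω (fun z => (g z : ℂ)) x ^ q := by
    intro n hn x hx
    have hck : (2 : ℝ) ^ ((n : ℤ) - N) = c n := by
      rw [zpow_sub₀ two_ne_zero, zpow_natCast, zpow_natCast]
    have hc1 : c n ≤ 1 := div_le_one_of_le₀
      (pow_le_pow_right₀ one_le_two (Finset.mem_range.1 hn).le) (by positivity)
    have hkt : c n * (δ₁ / 2 ^ n) = δ := by simp only [c, δ]; field_simp
    have hx3 : ‖x‖ ≤ 3 * R := calc
      ‖x‖ ≤ |b.repr x 0| + |b.repr x 1| := by simpa using b.norm_le_sum_abs_repr x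
      _ ≤ (R + R) + R := by
        have hch0 : 0 ≤ c n * h := mul_nonneg (by positivity) (by linarith)
        have hch : c n * h ≤ h := mul_le_of_le_one_left (by linarith) hc1
        have hδδ₁ : δ ≤ δ₁ := div_le_self hδ₁.le (one_le_pow₀ one_le_two)
        gcongr
        exacts [abs_le.2 ⟨by linarith [hx.1.1], by linarith [hx.1.2]⟩, abs_le.2 hx.2]
      _ = 3 * R := by ring
    refine ENNReal.rpow_le_rpow ?_ hq
    refine bdyMeasure_capPlus_le_lacMax hΩR hg hg01 hg1 (hck ▸ hc1) (hck ▸ hkt) ?_ hx3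
    rw [hck, ← hb0]
    exact Ico_subset_Icc_self hx.1
  have hdisj : (↑(Finset.range N) : Set ℕ).PairwiseDisjoint S := by
    have hI := pairwise_disjoint_Ico_add (a := fun n => c n * h) hδ.le fun n => by
      have : δ₁ ≤ 2 ^ n * h :=
        hδ₁h.trans (le_mul_of_one_le_left (by linarith) (one_le_pow₀ one_le_two))
      simp only [c, δ, pow_succ]
      rw [div_mul_eq_mul_div, div_mul_eq_mul_div, ← add_div]
      exact div_le_div_of_nonneg_right (by linarith) (by positivity)
    exact Pairwise.set_pairwise (fun m n hmn => ((hI hmn).preimage fun x => b.repr x 0).mono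
      (fun x hx => hx.1) (fun x hx => hx.1)) _
  have hvol n : volume (S n) = ENNReal.ofReal δ * ENNReal.ofReal (2 * R) := by
    rw [b.volume_setOf_repr_mem_and_repr_mem measurableSet_Ico measurableSet_Icc, Real.volume_Ico,
      Real.volume_Icc, add_sub_cancel_left, sub_neg_eq_add, ← two_mul]
  calc _ = ∑ n ∈ Finset.range N, bdyMeasure Ω (capPlus Ω θ (δ₁ / 2 ^ n)) ^ q * volume (S n) := by
        simp only [Finset.sum_mul, hvol]
    _ ≤ _ := sum_mul_measure_le_lintegral hdisj (fun n _ => hSm n) hdet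

theorem tsum_bdyMeasure_capPlus_rpow_le {Ω : Set E²} [IsFiniteMeasure (bdyMeasure Ω)] {R : ℝ}
    (hR : 0 < R) (hΩR : Ω ⊆ closedBall 0 R) {θ : E²} (hθ : ‖θ‖ = 1) {δ₁ : ℝ} (hδ₁ : 0 < δ₁)
    (hδ₁h : δ₁ ≤ suppFn Ω θ) (hhR : suppFn Ω θ ≤ R) {q : ℝ} (hq : 0 < q) {A : ℝ≥0∞}
    (hbound : ∀ f : E² → ℂ, Continuous f → HasCompactSupport f →
      (∫⁻ x, lacMax Ω f x ^ q) ^ (1 / q) ≤ A * (∫⁻ x, (‖f x‖₊ : ℝ≥0∞) ^ q) ^ (1 / q)) :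
    ∑' n : ℕ, bdyMeasure Ω (capPlus Ω θ (δ₁ / 2 ^ n)) ^ q ≤ 64 * A ^ q := by
  refine ENNReal.tsum_le_of_sum_range_le fun N => ?_
  set δ := δ₁ / 2 ^ N
  have hδ : 0 < δ := by positivity
  obtain ⟨g, hgc, hgs, hg01, hg1, hgsupp⟩ := exists_slab_bump θ (by positivity : 0 < 2 * δ)
    (by linarith : 2 * δ < 4 * δ) (by positivity : 0 < 4 * R) (by linarith : 4 * R < 8 * R)
  set V := ENNReal.ofReal δ * ENNReal.ofReal (2 * R)
  have hf : ∫⁻ x, (‖(g x : ℂ)‖₊ : ℝ≥0∞) ^ q ≤ 64 * V := calc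
    _ ≤ ENNReal.ofReal (2 * (4 * δ)) * ENNReal.ofReal (2 * (8 * R)) :=
      lintegral_nnnorm_rpow_le_of_support_subset_slab hθ
        (fun x => by simpa [abs_of_nonneg (hg01 x).1] using (hg01 x).2)
        (fun x hx => hgsupp (by simpa using hx)) hq
    _ = 64 * V := by
      rw [show 2 * (4 * δ) = 8 * δ by ring, show 2 * (8 * R) = 8 * (2 * R) by ring,
        ENNReal.ofReal_mul (by norm_num), ENNReal.ofReal_mul (by norm_num),
        show (64 : ℝ≥0∞) = ENNReal.ofReal 8 * ENNReal.ofReal 8 by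
          rw [← ENNReal.ofReal_mul (by norm_num)]; norm_num]
      ring
  have hV : V ≠ 0 :=
    mul_ne_zero (ENNReal.ofReal_pos.2 hδ).ne' (ENNReal.ofReal_pos.2 (by positivity)).ne'
  refine (ENNReal.mul_le_mul_iff_left hV (ENNReal.mul_ne_top ENNReal.ofReal_ne_top
    ENNReal.ofReal_ne_top)).1 ?_
  calc (∑ n ∈ Finset.range N, bdyMeasure Ω (capPlus Ω θ (δ₁ / 2 ^ n)) ^ q) * V
      ≤ ∫⁻ x, lacMax Ω (fun z => (g z : ℂ)) x ^ q :=
        sum_bdyMeasure_capPlus_rpow_mul_le_lintegral_lacMax hΩR hθ hδ₁ hδ₁h hhR hq.le N hgc hg01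
          hg1
    _ ≤ A ^ q * ∫⁻ x, (‖(g x : ℂ)‖₊ : ℝ≥0∞) ^ q :=
        ENNReal.le_rpow_mul_of_rpow_inv_le hq
          (hbound _ (Complex.continuous_ofReal.comp hgc) (hgs.comp_left Complex.ofReal_zero))
    _ ≤ A ^ q * (64 * V) := by gcongr
    _ = 64 * A ^ q * V := by ring

theorem lintegral_capLen_rpow_div_le {Ω : Set E²} [IsFiniteMeasure (bdyMeasure Ω)]
    (hne : Ω.Nonempty) {R : ℝ} (hR : 0 < R) (hΩR : Ω ⊆ closedBall 0 R) {δ₁ : ℝ} (hδ₁ : 0 < δ₁)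
    (hδ₁h : ∀ ϑ : E², ‖ϑ‖ = 1 → δ₁ ≤ suppFn Ω ϑ) {q : ℝ} (hq : 0 < q) {A : ℝ≥0∞}
    (hbound : ∀ f : E² → ℂ, Continuous f → HasCompactSupport f →
      (∫⁻ x, lacMax Ω f x ^ q) ^ (1 / q) ≤ A * (∫⁻ x, (‖f x‖₊ : ℝ≥0∞) ^ q) ^ (1 / q))
    {θ : E²} (hθ : ‖θ‖ = 1) :
    ∫⁻ δ in Ioo 0 δ₁, capLen Ω θ δ ^ q / ENNReal.ofReal δ ≤ 128 * A ^ q := by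
  have hcaps {ϑ : E²} (hϑ : ‖ϑ‖ = 1) :
      ∑' n : ℕ, bdyMeasure Ω (capPlus Ω ϑ (δ₁ / 2 ^ n)) ^ q ≤ 64 * A ^ q :=
    tsum_bdyMeasure_capPlus_rpow_le hR hΩR hϑ hδ₁ (hδ₁h ϑ hϑ)
      ((suppFn_le hne hΩR ϑ).trans_eq (by rw [hϑ, mul_one])) hq hbound
  calc ∫⁻ δ in Ioo 0 δ₁, capLen Ω θ δ ^ q / ENNReal.ofReal δ
      ≤ ∑' n : ℕ, capLen Ω θ (δ₁ / 2 ^ n) ^ q := lintegral_Ioo_div_le_tsum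
        ((ENNReal.monotone_rpow_of_nonneg hq.le).comp (capLen_mono Ω θ)) hδ₁
    _ ≤ ∑' n : ℕ, (bdyMeasure Ω (capPlus Ω θ (δ₁ / 2 ^ n)) ^ q
          + bdyMeasure Ω (capPlus Ω (-θ) (δ₁ / 2 ^ n)) ^ q) :=
        ENNReal.tsum_le_tsum fun n => capLen_rpow_le Ω θ _ q
    _ ≤ 64 * A ^ q + 64 * A ^ q := by
        rw [ENNReal.tsum_add]
        exact add_le_add (hcaps hθ) (hcaps (by rwa [norm_neg]))
    _ = 128 * A ^ q := by ring

theorem stmt_1_general (Ω : Set (EuclideanSpace ℝ (Fin 2)))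
    (hΩopen : IsOpen Ω) (hΩconv : Convex ℝ Ω)
    (hΩbdd : Bornology.IsBounded Ω)
    (hΩ0 : (0 : EuclideanSpace ℝ (Fin 2)) ∈ Ω)
    (q : ℝ) (hq1 : 1 ≤ q)
    (B : ℝ)
    (hbound : ∀ f : EuclideanSpace ℝ (Fin 2) → ℂ,
        Continuous f → HasCompactSupport f →
        (∫⁻ x, (lacMax Ω f x) ^ q) ^ (1/q)
          ≤ ENNReal.ofReal B * (∫⁻ x, ((‖f x‖₊ : ℝ≥0∞)) ^ q) ^ (1/q)) :
    ∃ c > (0:ℝ), ∃ δ₁ > (0:ℝ),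
      ∀ θ : EuclideanSpace ℝ (Fin 2), ‖θ‖ = 1 →
        (∫⁻ δ in Set.Ioo (0:ℝ) δ₁, (capLen Ω θ δ) ^ q / ENNReal.ofReal δ) ^ (1/q)
          ≤ ENNReal.ofReal (c⁻¹ * B) := by
  have := isFiniteMeasure_bdyMeasure hΩopen hΩconv hΩbdd
  obtain ⟨R, hR, hΩR⟩ := hΩbdd.subset_closedBall_lt 0 0
  obtain ⟨r, hr, hball⟩ := Metric.isOpen_iff.1 hΩopen 0 hΩ0
  refine ⟨1 / 128, by norm_num, r / 2, by positivity, fun θ hθ => ?_⟩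
  calc (∫⁻ δ in Ioo 0 (r / 2), capLen Ω θ δ ^ q / ENNReal.ofReal δ) ^ (1 / q)
      ≤ (128 * ENNReal.ofReal B ^ q) ^ (1 / q) := by
        gcongr
        exact lintegral_capLen_rpow_div_le ⟨0, hΩ0⟩ hR hΩR (by positivity)
          (fun ϑ => le_suppFn_of_ball_subset hΩbdd hball (by positivity) (by linarith))
          (by linarith) hbound hθ
    _ ≤ 128 * ENNReal.ofReal B := ENNReal.mul_rpow_rpow_one_div_le (by norm_num) hq1
    _ = ENNReal.ofReal ((1 / 128)⁻¹ * B) := by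
        rw [ENNReal.ofReal_mul (by norm_num)]
        norm_num

/-- If `𝓜` is bounded on `L^q(ℝ²)` with operator bound `B` (tested on
continuous compactly supported functions), then
`sup_{θ ∈ S¹} (∫₀^{δ₁} Λ(θ,δ)^q δ⁻¹ dδ)^{1/q} ≤ c⁻¹ B` for constants
`c, δ₁ > 0` depending only on `Ω` and `q`. -/
theorem stmt_1 (Ω : Set (EuclideanSpace ℝ (Fin 2)))
    (hΩopen : IsOpen Ω) (hΩconv : Convex ℝ Ω)
    (hΩbdd : Bornology.IsBounded Ω)
    (hΩ0 : (0 : EuclideanSpace ℝ (Fin 2)) ∈ Ω)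
    (q : ℝ) (hq1 : 1 ≤ q)
    (B : ℝ) (hB : 0 < B)
    (hbound : ∀ f : EuclideanSpace ℝ (Fin 2) → ℂ,
        Continuous f → HasCompactSupport f →
        (∫⁻ x, (lacMax Ω f x) ^ q) ^ (1/q)
          ≤ ENNReal.ofReal B * (∫⁻ x, ((‖f x‖₊ : ℝ≥0∞)) ^ q) ^ (1/q)) :
    ∃ c > (0:ℝ), ∃ δ₁ > (0:ℝ),
      ∀ θ : EuclideanSpace ℝ (Fin 2), ‖θ‖ = 1 →
        (∫⁻ δ in Set.Ioo (0:ℝ) δ₁, (capLen Ω θ δ) ^ q / ENNReal.ofReal δ) ^ (1/q)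
          ≤ ENNReal.ofReal (c⁻¹ * B) :=
  stmt_1_general Ω hΩopen hΩconv hΩbdd hΩ0 q hq1 B hbound
end

section
/- Let γ and h be as defined below. If 0 ≤ s ≤ h(1/3), then s ≤ γ(1) and γ^{-1}(s) ≤ 3 h^{-1}(s). -/
open Set

/-- Let `γ` be `C²` on `[0,1]` with `γ(0) = γ'(0) = γ''(0) = 0` and `γ''`
nonnegative and strictly increasing, and let `h(t) = t² γ''(t)`.  If
`0 ≤ s ≤ h(1/3)` then `s ≤ γ(1)` and `γ⁻¹(s) ≤ 3 h⁻¹(s)`. -/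
theorem stmt_10 (γ γ' γ'' : ℝ → ℝ)
    (hd1 : ∀ t ∈ Set.Icc (0:ℝ) 1, HasDerivWithinAt γ (γ' t) (Set.Icc 0 1) t)
    (hd2 : ∀ t ∈ Set.Icc (0:ℝ) 1, HasDerivWithinAt γ' (γ'' t) (Set.Icc 0 1) t)
    (hc2 : ContinuousOn γ'' (Set.Icc 0 1))
    (h0 : γ 0 = 0) (h0' : γ' 0 = 0) (h0'' : γ'' 0 = 0)
    (hnn : ∀ t ∈ Set.Icc (0:ℝ) 1, 0 ≤ γ'' t)
    (hsm : StrictMonoOn γ'' (Set.Icc 0 1))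
    (γinv : ℝ → ℝ) (hγinv : ∀ t ∈ Set.Icc (0:ℝ) 1, γinv (γ t) = t)
    (hinv : ℝ → ℝ) (hhinv : ∀ t ∈ Set.Icc (0:ℝ) 1, hinv (t ^ 2 * γ'' t) = t)
    (s : ℝ) (hs0 : 0 ≤ s) (hs1 : s ≤ (1/3 : ℝ) ^ 2 * γ'' (1/3)) :
    s ≤ γ 1 ∧ γinv s ≤ 3 * hinv s := by
  have cγ : ContinuousOn γ (Icc 0 1) := fun t ht => (hd1 t ht).continuousWithinAt
  have cγ' : ContinuousOn γ' (Icc 0 1) := fun t ht => (hd2 t ht).continuousWithinAt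
  -- γ'' positive on (0,1]
  have hpos'' : ∀ t ∈ Icc (0:ℝ) 1, 0 < t → 0 < γ'' t := by
    intro t ht ht0
    have := hsm (left_mem_Icc.2 one_pos.le) ht ht0
    rwa [h0''] at this
  -- γ' strictly monotone on [0,1]
  have sγ' : StrictMonoOn γ' (Icc 0 1) := by
    apply strictMonoOn_of_hasDerivWithinAt_pos (convex_Icc 0 1) cγ'
    · intro x hx
      rw [interior_Icc] at hx ⊢
      exact (hd2 x (Ioo_subset_Icc_self hx)).mono Ioo_subset_Icc_self
    · intro x hx
      rw [interior_Icc] at hx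
      exact hpos'' x (Ioo_subset_Icc_self hx) hx.1
  have hγ'nn : ∀ t ∈ Icc (0:ℝ) 1, 0 ≤ γ' t := by
    intro t ht
    rcases eq_or_lt_of_le ht.1 with h | h
    · rw [← h, h0']
    · have := sγ' (left_mem_Icc.2 one_pos.le) ht h
      linarith [h0']
  have hγ'pos : ∀ t ∈ Icc (0:ℝ) 1, 0 < t → 0 < γ' t := by
    intro t ht ht0
    have := sγ' (left_mem_Icc.2 one_pos.le) ht ht0
    rwa [h0'] at this
  -- γ strictly monotone on [0,1]
  have sγ : StrictMonoOn γ (Icc 0 1) := by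
    apply strictMonoOn_of_hasDerivWithinAt_pos (convex_Icc 0 1) cγ
    · intro x hx
      rw [interior_Icc] at hx ⊢
      exact (hd1 x (Ioo_subset_Icc_self hx)).mono Ioo_subset_Icc_self
    · intro x hx
      rw [interior_Icc] at hx
      exact hγ'pos x (Ioo_subset_Icc_self hx) hx.1
  -- get u with u² γ''(u) = s
  have h13 : (1/3 : ℝ) ∈ Icc (0:ℝ) 1 := by constructor <;> norm_num
  have hcontH : ContinuousOn (fun t : ℝ => t ^ 2 * γ'' t) (Icc 0 (1/3)) := by
    apply ContinuousOn.mul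
    · exact (continuousOn_id.pow 2)
    · exact hc2.mono (Icc_subset_Icc le_rfl (by norm_num))
  have hmem : s ∈ Icc ((0:ℝ) ^ 2 * γ'' 0) ((1/3:ℝ) ^ 2 * γ'' (1/3)) := by
    constructor
    · simp [h0'']; exact hs0
    · exact hs1
  obtain ⟨u, hu, huh⟩ := intermediate_value_Icc (by norm_num : (0:ℝ) ≤ 1/3) hcontH hmem
  rw [mem_Icc] at hu
  have huh : u ^ 2 * γ'' u = s := huh
  have hu1 : u ∈ Icc (0:ℝ) 1 := ⟨hu.1, by linarith [hu.2]⟩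
  have h3u1 : 3 * u ≤ 1 := by linarith [hu.2]
  have hinveq : hinv s = u := by rw [← huh, hhinv u hu1]
  -- key inequality s ≤ γ (3u)
  have key : s ≤ γ (3 * u) := by
    rcases eq_or_lt_of_le hu.1 with h | hu0
    · rw [← h] at huh ⊢
      rw [← huh]
      simp [h0'', h0]
    · -- MVT on γ over [2u, 3u]
      have h2u3u : 2 * u < 3 * u := by linarith
      have hIccsub : Icc (2*u) (3*u) ⊆ Icc (0:ℝ) 1 :=
        Icc_subset_Icc (by linarith) h3u1
      obtain ⟨c, hc, hceq⟩ := exists_hasDerivAt_eq_slope γ γ' h2u3u (cγ.mono hIccsub)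
        (fun x hx => (hd1 x (hIccsub (Ioo_subset_Icc_self hx))).hasDerivAt
          (Icc_mem_nhds (by nlinarith [hx.1]) (by nlinarith [hx.2])))
      -- MVT on γ' over [u, 2u]
      have hu2u : u < 2 * u := by linarith
      have hIccsub2 : Icc u (2*u) ⊆ Icc (0:ℝ) 1 :=
        Icc_subset_Icc hu.1 (by linarith)
      obtain ⟨d, hd, hdeq⟩ := exists_hasDerivAt_eq_slope γ' γ'' hu2u (cγ'.mono hIccsub2)
        (fun x hx => (hd2 x (hIccsub2 (Ioo_subset_Icc_self hx))).hasDerivAt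
          (Icc_mem_nhds (by nlinarith [hx.1]) (by nlinarith [hx.2])))
      -- chain inequalities
      have hcmem : c ∈ Icc (0:ℝ) 1 := hIccsub (Ioo_subset_Icc_self hc)
      have hdmem : d ∈ Icc (0:ℝ) 1 := hIccsub2 (Ioo_subset_Icc_self hd)
      have h2umem : (2*u) ∈ Icc (0:ℝ) 1 := hIccsub2 (right_mem_Icc.2 hu2u.le)
      have h3umem : (3*u) ∈ Icc (0:ℝ) 1 := hIccsub (right_mem_Icc.2 h2u3u.le)
      -- γ'(c) ≥ γ'(2u)
      have hc1 : γ' (2*u) ≤ γ' c := (sγ'.monotoneOn h2umem hcmem hc.1.le)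
      -- γ''(d) ≥ γ''(u)
      have hd1' : γ'' u ≤ γ'' d := (hsm.monotoneOn hu1 hdmem hd.1.le)
      have hγ2u : 0 ≤ γ (2*u) := by
        have := sγ.monotoneOn (left_mem_Icc.2 one_pos.le) h2umem (by linarith)
        linarith [h0]
      have e1 : γ (3*u) - γ (2*u) = γ' c * u := by
        have h' : (3*u - 2*u) = u := by ring
        rw [h'] at hceq
        rw [hceq, div_mul_cancel₀ _ hu0.ne']
      have e2 : γ' (2*u) - γ' u = γ'' d * u := by
        have h' : (2*u - u) = u := by ring
        rw [h'] at hdeq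
        rw [hdeq, div_mul_cancel₀ _ hu0.ne']
      have hγ'u : 0 ≤ γ' u := hγ'nn u hu1
      have : u ^ 2 * γ'' u ≤ γ (3*u) := by nlinarith
      linarith [huh, this]
  constructor
  · calc s ≤ γ (3 * u) := key
      _ ≤ γ 1 := sγ.monotoneOn (⟨by linarith, h3u1⟩) (right_mem_Icc.2 one_pos.le) h3u1
  · -- IVT for γ on [0, 3u]
    have h03u : (0:ℝ) ≤ 3 * u := by linarith [hu.1]
    have hmem2 : s ∈ Icc (γ 0) (γ (3*u)) := by
      constructor
      · rw [h0]; exact hs0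
      · exact key
    obtain ⟨v, hv, hveq⟩ := intermediate_value_Icc h03u
      (cγ.mono (Icc_subset_Icc le_rfl h3u1)) hmem2
    have hv1 : v ∈ Icc (0:ℝ) 1 := ⟨hv.1, le_trans hv.2 h3u1⟩
    have : γinv s = v := by rw [← hveq, hγinv v hv1]
    rw [this, hinveq]
    linarith [hv.2]
end

section
/- Let γ : [0,1] → ℝ be Borel measurable and bounded, and define the maximal operator along the curve (t, γ(t)) by 𝔐f(x) = sup_{0 < r ≤ 1} r^{-1} ∫₀^r |f(x₁ − t, x₂ − γ(t))| dt. Suppose that for every p ∈ (1,∞) there is a constant A_p such that ‖𝔐f‖_{L^p(ℝ²)} ≤ A_p ‖f‖_{L^p(ℝ²)} for all f ∈ L^p(ℝ²). Then for every p ∈ (1,2] there is a constant C_p such that for every sequence (f_k)_{k ∈ ℤ} of measurable functions on ℝ², ‖(Σ_{k ∈ ℤ} (𝔐f_k)²)^{1/2}‖_{L^p(ℝ²)} ≤ C_p ‖(Σ_{k ∈ ℤ} |f_k|²)^{1/2}‖_{L^p(ℝ²)}. -/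
/-!
Put `uₖ = |fₖ|`, `D = ∑ₖ uₖ²`, `θ = p/2 ∈ (1/2, 1]`, and factor `uₖ = hₖ^θ g^(1-θ)` with
`g = D^(1/2)` and `hₖ = uₖ^(2/p) D^(1/2 - 1/p)`; then `∑ₖ hₖ^p = g^p = D^θ` wherever `D < ∞`,
which is almost everywhere once the right-hand side is finite. Hölder's inequality in each
average defining `𝔐` gives `𝔐uₖ ≤ (𝔐hₖ)^θ (𝔐g)^(1-θ)`, almost everywhere since `𝔐` does not see
null sets, hence `(∑ₖ (𝔐uₖ)²)^θ ≤ (∑ₖ (𝔐hₖ)^p)^θ ((𝔐g)^p)^(1-θ)`. Hölder's inequality in `x`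
and the scalar `L^p` bound for every `hₖ` and for `g` bound the integral of the right-hand side
by `A^p ∫ D^θ`.
-/

open MeasureTheory Set
open scoped ENNReal

/-- The maximal operator along the curve `(t, γ(t))`:
`𝔐f(x) = sup_{0 < r ≤ 1} r⁻¹ ∫₀^r |f(x₁ − t, x₂ − γ(t))| dt`. -/
noncomputable def curveMax (γ : ℝ → ℝ) (f : ℝ × ℝ → ℂ) (x : ℝ × ℝ) : ℝ≥0∞ :=
  ⨆ r : Set.Ioc (0:ℝ) 1,
    (ENNReal.ofReal (r:ℝ))⁻¹ *
      ∫⁻ t in Set.Ioc (0:ℝ) (r:ℝ), (‖f (x.1 - t, x.2 - γ t)‖₊ : ℝ≥0∞)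

theorem rpow_one_div_le_mul_rpow_one_div_iff {p : ℝ} (hp : 0 < p) {X Y a : ℝ≥0∞} :
    X ^ (1 / p) ≤ a * Y ^ (1 / p) ↔ X ≤ a ^ p * Y := by
  rw [one_div, ENNReal.rpow_inv_le_iff hp, ENNReal.mul_rpow_of_nonneg _ _ hp.le,
    ← ENNReal.rpow_mul, inv_mul_cancel₀ hp.ne', ENNReal.rpow_one]

theorem lintegral_tsum_rpow_le {α ι : Type*} [MeasurableSpace α] [Countable ι] {μ : Measure α}
    {T : (α → ℝ≥0∞) → α → ℝ≥0∞} {p : ℝ} {C : ℝ≥0∞}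
    (hT : ∀ w, Measurable w → Measurable (T w))
    (hbound : ∀ w, Measurable w → ∫⁻ x, T w x ^ p ∂μ ≤ C * ∫⁻ x, w x ^ p ∂μ)
    {w : ι → α → ℝ≥0∞} (hw : ∀ k, Measurable (w k)) :
    ∫⁻ x, ∑' k, T (w k) x ^ p ∂μ ≤ C * ∫⁻ x, ∑' k, w k x ^ p ∂μ := by
  rw [lintegral_tsum fun k => ((hT _ (hw k)).pow_const p).aemeasurable,
    lintegral_tsum fun k => ((hw k).pow_const p).aemeasurable, ← ENNReal.tsum_mul_left]
  exact ENNReal.tsum_le_tsum fun k => hbound (w k) (hw k)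

theorem tsum_sq_rpow_le_of_le_rpow_mul_rpow {ι : Type*} {p : ℝ} (hp : 0 < p)
    {a b : ι → ℝ≥0∞} {y : ℝ≥0∞} (h : ∀ k, a k ≤ b k ^ (p / 2) * y ^ (1 - p / 2)) :
    (∑' k, a k ^ 2) ^ (p / 2) ≤ (∑' k, b k ^ p) ^ (p / 2) * (y ^ p) ^ (1 - p / 2) := by
  calc (∑' k, a k ^ 2) ^ (p / 2)
      ≤ (∑' k, (b k ^ (p / 2) * y ^ (1 - p / 2)) ^ 2) ^ (p / 2) := by
        gcongr with k
        exact h k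
    _ = _ := by
        simp_rw [mul_pow, ← ENNReal.rpow_natCast, ← ENNReal.rpow_mul]
        rw [ENNReal.tsum_mul_right, ENNReal.mul_rpow_of_nonneg _ _ (by positivity),
          ← ENNReal.rpow_mul]
        ring_nf

noncomputable def holderFactor (p : ℝ) (a d : ℝ≥0∞) : ℝ≥0∞ :=
  a ^ (2 / p) * (d ^ (1 / p - 1 / 2))⁻¹

section HolderFactor

variable {p : ℝ} {a d : ℝ≥0∞}

theorem holderFactor_rpow_mul_rpow (hp : 0 < p) (hd : d ≠ ∞) (had : a ^ 2 ≤ d) :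
    holderFactor p a d ^ (p / 2) * (d ^ (1 / 2 : ℝ)) ^ (1 - p / 2) = a := by
  rcases eq_or_ne d 0 with rfl | hd0
  · have ha : a = 0 := by simpa using had
    simp [holderFactor, ha, hp]
  have hd' : d ^ (1 / 2 - p / 4) ≠ 0 := (ENNReal.rpow_pos (pos_iff_ne_zero.2 hd0) hd).ne'
  have hd'' : d ^ (1 / 2 - p / 4) ≠ ∞ := ENNReal.rpow_ne_top_of_ne_zero hd0 hd
  rw [holderFactor, ENNReal.mul_rpow_of_nonneg _ _ (by positivity), ENNReal.inv_rpow,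
    ← ENNReal.rpow_mul, ← ENNReal.rpow_mul, ← ENNReal.rpow_mul,
    show 2 / p * (p / 2) = 1 by field_simp, show (1 / p - 1 / 2) * (p / 2) = 1 / 2 - p / 4 by
      field_simp; ring, show 1 / 2 * (1 - p / 2) = 1 / 2 - p / 4 by ring,
    ENNReal.rpow_one, mul_assoc, ENNReal.inv_mul_cancel hd' hd'', mul_one]

theorem holderFactor_rpow (hp : 0 < p) :
    holderFactor p a d ^ p = a ^ 2 * (d ^ (1 - p / 2))⁻¹ := by
  rw [holderFactor, ENNReal.mul_rpow_of_nonneg _ _ hp.le, ENNReal.inv_rpow,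
    ← ENNReal.rpow_mul, ← ENNReal.rpow_mul, show 2 / p * p = (2 : ℕ) by field_simp; norm_num,
    show (1 / p - 1 / 2) * p = 1 - p / 2 by field_simp, ENNReal.rpow_natCast]

theorem tsum_holderFactor_rpow {ι : Type*} (hp : 0 < p) {a : ι → ℝ≥0∞}
    (hd : ∑' k, a k ^ 2 ≠ ∞) :
    ∑' k, holderFactor p (a k) (∑' k, a k ^ 2) ^ p = (∑' k, a k ^ 2) ^ (p / 2) := by
  simp_rw [holderFactor_rpow hp]
  rw [ENNReal.tsum_mul_right]
  set d := ∑' k, a k ^ 2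
  rcases eq_or_ne d 0 with hd0 | hd0
  · simp [hd0, hp]
  nth_rewrite 1 [← ENNReal.rpow_one d]
  rw [← ENNReal.rpow_neg, ← ENNReal.rpow_add _ _ hd0 hd]
  ring_nf

end HolderFactor

noncomputable def curveLIntegral (γ : ℝ → ℝ) (u : ℝ × ℝ → ℝ≥0∞) (r : ℝ) (x : ℝ × ℝ) : ℝ≥0∞ :=
  ∫⁻ t in Ioc 0 r, u (x.1 - t, x.2 - γ t)

noncomputable def lcurveMax (γ : ℝ → ℝ) (u : ℝ × ℝ → ℝ≥0∞) (x : ℝ × ℝ) : ℝ≥0∞ :=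
  ⨆ r : Ioc (0:ℝ) 1, (ENNReal.ofReal r)⁻¹ * curveLIntegral γ u r x

section CurveMaximal

variable {γ : ℝ → ℝ} {u v w : ℝ × ℝ → ℝ≥0∞}

theorem curveMax_eq_lcurveMax (γ : ℝ → ℝ) (f : ℝ × ℝ → ℂ) :
    curveMax γ f = lcurveMax γ fun y => ‖f y‖₊ := rfl

theorem le_lcurveMax (u : ℝ × ℝ → ℝ≥0∞) (x : ℝ × ℝ) (r : Ioc (0:ℝ) 1) :
    (ENNReal.ofReal r)⁻¹ * curveLIntegral γ u r x ≤ lcurveMax γ u x :=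
  le_iSup (fun r : Ioc (0:ℝ) 1 => (ENNReal.ofReal r)⁻¹ * curveLIntegral γ u r x) r

theorem measurable_curveLIntegral (hγ : Measurable γ) (hu : Measurable u) (r : ℝ) :
    Measurable (curveLIntegral γ u r) :=
  Measurable.lintegral_prod_right (f := fun (x : ℝ × ℝ) (t : ℝ) => u (x.1 - t, x.2 - γ t))
    (by fun_prop)

theorem curveLIntegral_mono_right {r r' : ℝ} (h : r ≤ r') (x : ℝ × ℝ) :
    curveLIntegral γ u r x ≤ curveLIntegral γ u r' x :=
  lintegral_mono_set (Ioc_subset_Ioc_right h)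

theorem curveLIntegral_eq_iSup_rat (u : ℝ × ℝ → ℝ≥0∞) (r : ℝ) (x : ℝ × ℝ) :
    curveLIntegral γ u r x
      = ⨆ q : {q : ℚ // 0 < (q : ℝ) ∧ (q : ℝ) < r}, curveLIntegral γ u q x := by
  have hIoo : Ioo (0:ℝ) r = ⋃ q : {q : ℚ // 0 < (q : ℝ) ∧ (q : ℝ) < r}, Ioc 0 (q : ℝ) := by
    ext t
    simp only [mem_Ioo, mem_iUnion, mem_Ioc, Subtype.exists]
    constructor
    · rintro ⟨ht0, htr⟩
      obtain ⟨q, htq, hqr⟩ := exists_rat_btwn htr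
      exact ⟨q, ⟨ht0.trans htq, hqr⟩, ht0, htq.le⟩
    · rintro ⟨q, ⟨-, hqr⟩, ht0, htq⟩
      exact ⟨ht0, htq.trans_lt hqr⟩
  have hdir : Directed (· ⊆ ·) fun q : {q : ℚ // 0 < (q : ℝ) ∧ (q : ℝ) < r} => Ioc (0:ℝ) q :=
    Monotone.directed_le fun a b hab => Ioc_subset_Ioc_right (by exact_mod_cast hab)
  rw [curveLIntegral, ← setLIntegral_congr Ioo_ae_eq_Ioc, hIoo,
    setLIntegral_iUnion_of_directed _ hdir]
  rfl

theorem lcurveMax_eq_iSup_rat (u : ℝ × ℝ → ℝ≥0∞) (x : ℝ × ℝ) :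
    lcurveMax γ u x = ⨆ q : {q : ℚ // 0 < (q : ℝ) ∧ (q : ℝ) ≤ 1},
      (ENNReal.ofReal q)⁻¹ * curveLIntegral γ u q x := by
  refine le_antisymm (iSup_le fun ⟨r, hr0, hr1⟩ => ?_)
    (iSup_le fun ⟨q, hq0, hq1⟩ => le_lcurveMax u x ⟨q, hq0, hq1⟩)
  rw [curveLIntegral_eq_iSup_rat, ENNReal.mul_iSup]
  refine iSup_le fun ⟨q, hq0, hqr⟩ => le_iSup_of_le ⟨q, hq0, hqr.le.trans hr1⟩ ?_
  gcongr

theorem measurable_lcurveMax (hγ : Measurable γ) (hu : Measurable u) :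
    Measurable (lcurveMax γ u) := by
  rw [funext (lcurveMax_eq_iSup_rat u)]
  exact Measurable.iSup fun q => (measurable_curveLIntegral hγ hu _).const_mul _

theorem lcurveMax_le_add (hγ : Measurable γ) (hu : Measurable u) (h : ∀ y, w y ≤ u y + v y)
    (x : ℝ × ℝ) : lcurveMax γ w x ≤ lcurveMax γ u x + lcurveMax γ v x := by
  refine iSup_le fun r => ?_
  have hJ : curveLIntegral γ w r x ≤ curveLIntegral γ u r x + curveLIntegral γ v r x :=
    (lintegral_mono fun t => h _).trans_eq (lintegral_add_left (by fun_prop) _)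
  calc (ENNReal.ofReal r)⁻¹ * curveLIntegral γ w r x
      ≤ (ENNReal.ofReal r)⁻¹ * curveLIntegral γ u r x
        + (ENNReal.ofReal r)⁻¹ * curveLIntegral γ v r x := by rw [← mul_add]; gcongr
    _ ≤ lcurveMax γ u x + lcurveMax γ v x := add_le_add (le_lcurveMax u x r) (le_lcurveMax v x r)

theorem ae_lcurveMax_eq_zero (hγ : Measurable γ) (hu : Measurable u) (h0 : u =ᵐ[volume] 0) :
    lcurveMax γ u =ᵐ[volume] 0 := by
  have hint : ∫⁻ x, curveLIntegral γ u 1 x = 0 := by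
    have htrans : ∀ t : ℝ, ∫⁻ x : ℝ × ℝ, u (x.1 - t, x.2 - γ t) = 0 := fun t => by
      rw [show (fun x : ℝ × ℝ => u (x.1 - t, x.2 - γ t)) = fun x => u (x - (t, γ t)) from rfl,
        lintegral_sub_right_eq_self u (t, γ t), lintegral_congr_ae h0]
      simp
    simp only [curveLIntegral]
    rw [lintegral_lintegral_swap (by fun_prop)]
    simp [htrans]
  filter_upwards [(lintegral_eq_zero_iff (measurable_curveLIntegral hγ hu 1)).1 hint] with x hx
  simp only [Pi.zero_apply] at hx ⊢
  refine le_antisymm (iSup_le fun r => ?_) bot_le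
  have hr : curveLIntegral γ u r x = 0 :=
    le_antisymm ((curveLIntegral_mono_right r.2.2 x).trans_eq hx) bot_le
  rw [hr, mul_zero]

theorem lcurveMax_mono_ae (hγ : Measurable γ) (hw : Measurable w) (hv : Measurable v)
    (h : w ≤ᵐ[volume] v) : lcurveMax γ w ≤ᵐ[volume] lcurveMax γ v := by
  set S := {y | v y < w y}
  have hS : MeasurableSet S := measurableSet_lt hv hw
  have hle : ∀ y, w y ≤ v y + S.indicator (fun _ => ∞) y := fun y => by
    by_cases hy : y ∈ S
    · simp [indicator_of_mem hy]
    · simpa [indicator_of_notMem hy] using not_lt.1 hy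
  have hnull : S.indicator (fun _ => ∞) =ᵐ[volume] 0 := by
    filter_upwards [h] with y hy
    exact indicator_of_notMem (s := S) (not_lt.2 hy) _
  filter_upwards [ae_lcurveMax_eq_zero hγ (measurable_const.indicator hS) hnull] with x hx
  simpa [hx] using lcurveMax_le_add hγ hv hle x

theorem lcurveMax_rpow_mul_rpow_le (hγ : Measurable γ) (hu : Measurable u) (hv : Measurable v)
    {α β : ℝ} (hα : 0 ≤ α) (hβ : 0 ≤ β) (hαβ : α + β = 1) (x : ℝ × ℝ) :
    lcurveMax γ (fun y => u y ^ α * v y ^ β) x ≤ lcurveMax γ u x ^ α * lcurveMax γ v x ^ β := by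
  refine iSup_le fun r => ?_
  set z := (ENNReal.ofReal r)⁻¹
  have hJ : curveLIntegral γ (fun y => u y ^ α * v y ^ β) r x
      ≤ curveLIntegral γ u r x ^ α * curveLIntegral γ v r x ^ β :=
    ENNReal.lintegral_mul_norm_pow_le (by fun_prop) (by fun_prop) hα hβ hαβ
  calc z * curveLIntegral γ (fun y => u y ^ α * v y ^ β) r x
      ≤ z ^ α * z ^ β * (curveLIntegral γ u r x ^ α * curveLIntegral γ v r x ^ β) := by
        rw [← ENNReal.rpow_add_of_nonneg _ _ hα hβ, hαβ, ENNReal.rpow_one]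
        gcongr
    _ = (z * curveLIntegral γ u r x) ^ α * (z * curveLIntegral γ v r x) ^ β := by
        rw [ENNReal.mul_rpow_of_nonneg _ _ hα, ENNReal.mul_rpow_of_nonneg _ _ hβ]
        ring
    _ ≤ lcurveMax γ u x ^ α * lcurveMax γ v x ^ β := by
        gcongr <;> exact le_lcurveMax _ x r

theorem lcurveMax_ae_le_rpow_mul_rpow (hγ : Measurable γ) (hw : Measurable w)
    (hu : Measurable u) (hv : Measurable v) {α β : ℝ} (hα : 0 ≤ α) (hβ : 0 ≤ β)
    (hαβ : α + β = 1) (h : w ≤ᵐ[volume] fun y => u y ^ α * v y ^ β) :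
    ∀ᵐ x, lcurveMax γ w x ≤ lcurveMax γ u x ^ α * lcurveMax γ v x ^ β := by
  filter_upwards [lcurveMax_mono_ae hγ hw (by fun_prop) h] with x hx
  exact hx.trans (lcurveMax_rpow_mul_rpow_le hγ hu hv hα hβ hαβ x)

theorem lintegral_lcurveMax_rpow_le (hγ : Measurable γ) {p A : ℝ} (hp : 0 < p)
    (hA : 0 < A)
    (hbound : ∀ f : ℝ × ℝ → ℂ, Measurable f →
      (∫⁻ x, curveMax γ f x ^ p) ^ (1 / p)
        ≤ ENNReal.ofReal A * (∫⁻ x, (‖f x‖₊ : ℝ≥0∞) ^ p) ^ (1 / p))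
    (hw : Measurable w) :
    ∫⁻ x, lcurveMax γ w x ^ p ≤ ENNReal.ofReal A ^ p * ∫⁻ x, w x ^ p := by
  rcases eq_or_ne (∫⁻ x, w x ^ p) ∞ with htop | htop
  · simp [htop, ENNReal.mul_top, hA]
  set f : ℝ × ℝ → ℂ := fun y => ((w y).toReal : ℂ)
  have hf : Measurable f := by fun_prop
  have hwf : w =ᵐ[volume] fun y => (‖f y‖₊ : ℝ≥0∞) := by
    filter_upwards [ae_lt_top (hw.pow_const p) htop] with y hy
    have hy : w y ≠ ∞ := fun h => by simp [h, hp] at hy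
    simp only [f, Complex.nnnorm_real]
    rw [← enorm_eq_nnnorm, Real.enorm_eq_ofReal ENNReal.toReal_nonneg, ENNReal.ofReal_toReal hy]
  calc ∫⁻ x, lcurveMax γ w x ^ p ≤ ∫⁻ x, curveMax γ f x ^ p := by
        refine lintegral_mono_ae ?_
        filter_upwards [lcurveMax_mono_ae hγ hw (by fun_prop) hwf.le] with x hx
        gcongr
        exact hx
    _ ≤ ENNReal.ofReal A ^ p * ∫⁻ x, (‖f x‖₊ : ℝ≥0∞) ^ p :=
        (rpow_one_div_le_mul_rpow_one_div_iff hp).1 (hbound f hf)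
    _ = ENNReal.ofReal A ^ p * ∫⁻ x, w x ^ p := by
        refine congrArg _ (lintegral_congr_ae ?_)
        filter_upwards [hwf] with x hx
        rw [hx]

end CurveMaximal

theorem lintegral_tsum_sq_lcurveMax_rpow_le {γ : ℝ → ℝ} {ι : Type*} [Countable ι]
    (hγ : Measurable γ) {p : ℝ} (hp0 : 0 < p) (hp2 : p ≤ 2) {c : ℝ≥0∞} (hc : c ≠ 0)
    (hbound : ∀ w, Measurable w → ∫⁻ x, lcurveMax γ w x ^ p ≤ c ^ p * ∫⁻ x, w x ^ p)
    {u : ι → ℝ × ℝ → ℝ≥0∞} (hu : ∀ k, Measurable (u k)) :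
    ∫⁻ x, (∑' k, lcurveMax γ (u k) x ^ 2) ^ (p / 2)
      ≤ c ^ p * ∫⁻ x, (∑' k, u k x ^ 2) ^ (p / 2) := by
  set D := fun x => ∑' k, u k x ^ 2
  have hDm : Measurable D := Measurable.tsum fun k => (hu k).pow_const 2
  set R := ∫⁻ x, D x ^ (p / 2)
  rcases eq_or_ne R ∞ with hR | hR
  · simp [hR, ENNReal.mul_top, hc, hp0.le]
  have hD : ∀ᵐ x, D x ≠ ∞ := by
    filter_upwards [ae_lt_top (hDm.pow_const _) hR] with x hx h
    simp [h, hp0] at hx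
  set g := fun x => D x ^ (1 / 2 : ℝ)
  set h := fun k x => holderFactor p (u k x) (D x)
  have hgm : Measurable g := hDm.pow_const _
  have hhm : ∀ k, Measurable (h k) := fun k => by unfold h holderFactor; fun_prop
  set M := fun w => lcurveMax γ w
  have hMu : ∀ k, ∀ᵐ x, M (u k) x ≤ M (h k) x ^ (p / 2) * M g x ^ (1 - p / 2) := fun k =>
    lcurveMax_ae_le_rpow_mul_rpow hγ (hu k) (hhm k) hgm (by positivity) (by linarith) (by ring)
      (hD.mono fun x hx => (holderFactor_rpow_mul_rpow hp0 hx (ENNReal.le_tsum k)).ge)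
  have hP : ∫⁻ x, ∑' k, M (h k) x ^ p ≤ c ^ p * R := by
    refine (lintegral_tsum_rpow_le (fun w hw => measurable_lcurveMax hγ hw) hbound hhm).trans ?_
    gcongr
    refine lintegral_mono_ae (hD.mono fun x hx => ?_)
    exact (tsum_holderFactor_rpow hp0 hx).le
  have hG : ∫⁻ x, M g x ^ p ≤ c ^ p * R := by
    refine (hbound g hgm).trans_eq ?_
    congr 2 with x
    rw [← ENNReal.rpow_mul]
    ring_nf
  calc ∫⁻ x, (∑' k, M (u k) x ^ 2) ^ (p / 2)
      ≤ ∫⁻ x, (∑' k, M (h k) x ^ p) ^ (p / 2) * (M g x ^ p) ^ (1 - p / 2) :=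
        lintegral_mono_ae ((ae_all_iff.2 hMu).mono fun x hx =>
          tsum_sq_rpow_le_of_le_rpow_mul_rpow hp0 hx)
    _ ≤ (∫⁻ x, ∑' k, M (h k) x ^ p) ^ (p / 2) * (∫⁻ x, M g x ^ p) ^ (1 - p / 2) :=
        ENNReal.lintegral_mul_norm_pow_le
          (Measurable.tsum fun k =>
            (measurable_lcurveMax hγ (hhm k)).pow_const p).aemeasurable
          ((measurable_lcurveMax hγ hgm).pow_const p).aemeasurable
          (by positivity) (by linarith) (by ring)
    _ ≤ (c ^ p * R) ^ (p / 2) * (c ^ p * R) ^ (1 - p / 2) := by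
        gcongr
        linarith
    _ = c ^ p * R := by
        rw [← ENNReal.rpow_add_of_nonneg _ _ (by positivity) (by linarith), add_sub_cancel,
          ENNReal.rpow_one]

theorem stmt_13_general (γ : ℝ → ℝ) (hγm : Measurable γ)
    (hyp : ∀ p : ℝ, 1 < p → ∃ A : ℝ, 0 < A ∧
      ∀ f : ℝ × ℝ → ℂ, Measurable f →
        (∫⁻ x, (curveMax γ f x) ^ p) ^ (1/p)
          ≤ ENNReal.ofReal A * (∫⁻ x, ((‖f x‖₊ : ℝ≥0∞)) ^ p) ^ (1/p)) :
    ∀ p : ℝ, 1 < p → p ≤ 2 → ∃ C : ℝ, 0 < C ∧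
      ∀ f : ℤ → ℝ × ℝ → ℂ, (∀ k, Measurable (f k)) →
        (∫⁻ x, (∑' k : ℤ, (curveMax γ (f k) x) ^ (2:ℕ)) ^ (p/2)) ^ (1/p)
          ≤ ENNReal.ofReal C *
            (∫⁻ x, (∑' k : ℤ, ((‖f k x‖₊ : ℝ≥0∞)) ^ (2:ℕ)) ^ (p/2)) ^ (1/p) := by
  intro p hp1 hp2
  obtain ⟨A, hA0, hA⟩ := hyp p hp1
  have hp0 : 0 < p := by linarith
  refine ⟨A, hA0, fun f hf => ?_⟩
  simp only [curveMax_eq_lcurveMax]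
  rw [rpow_one_div_le_mul_rpow_one_div_iff hp0]
  exact lintegral_tsum_sq_lcurveMax_rpow_le hγm hp0 hp2 (ENNReal.ofReal_pos.2 hA0).ne'
    (fun w hw => lintegral_lcurveMax_rpow_le hγm hp0 hA0 hA hw)
    (fun k => (hf k).nnnorm.coe_nnreal_ennreal)

/-- If `𝔐` is bounded on `L^p(ℝ²)` for every `p ∈ (1,∞)`, then for
`p ∈ (1,2]` the vector-valued (`ℓ²`-valued) estimate
`‖(Σ_k (𝔐f_k)²)^{1/2}‖_p ≤ C_p ‖(Σ_k |f_k|²)^{1/2}‖_p` holds. -/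
theorem stmt_13 (γ : ℝ → ℝ) (hγm : Measurable γ)
    (hγb : ∃ M : ℝ, ∀ t ∈ Set.Icc (0:ℝ) 1, |γ t| ≤ M)
    (hyp : ∀ p : ℝ, 1 < p → ∃ A : ℝ, 0 < A ∧
      ∀ f : ℝ × ℝ → ℂ, Measurable f →
        (∫⁻ x, (curveMax γ f x) ^ p) ^ (1/p)
          ≤ ENNReal.ofReal A * (∫⁻ x, ((‖f x‖₊ : ℝ≥0∞)) ^ p) ^ (1/p)) :
    ∀ p : ℝ, 1 < p → p ≤ 2 → ∃ C : ℝ, 0 < C ∧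
      ∀ f : ℤ → ℝ × ℝ → ℂ, (∀ k, Measurable (f k)) →
        (∫⁻ x, (∑' k : ℤ, (curveMax γ (f k) x) ^ (2:ℕ)) ^ (p/2)) ^ (1/p)
          ≤ ENNReal.ofReal C *
            (∫⁻ x, (∑' k : ℤ, ((‖f k x‖₊ : ℝ≥0∞)) ^ (2:ℕ)) ^ (p/2)) ^ (1/p) :=
  stmt_13_general γ hγm hyp
end
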